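/- Let N ≥ 2 and let X_1, …, X_N be pairwise distinct real samples with order statistics X_(1) < X_(2) < … < X_(N). For any index 1 ≤ r ≤ N − 1 and any x with X_(r) < x < X_(r+1), the small-bandwidth limit of the KD-integral transform is lim_{h→0⁺} F̂^KDI_N(x; h) = (2r − 1)/(2(N − 1)). -/

import Mathlib

/-!
Substituting `u = (t - X_n)/h` gives `P_h(a, b) = (1/N) ∑ₙ (Φ((b - X_n)/h) - Φ((a - X_n)/h))`,
with `Φ` the standard normal distribution function. As `h → 0⁺`, `Φ(c/h)` tends to `1`, `1/2`
or `0` according as `c > 0`, `c = 0` or `c < 0`, the value `1/2` coming from the symmetry of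
the kernel. So in `P_h(X_(1), x)` the `r - 1` samples strictly between `X_(1)` and `x` keep
their full mass `1/N` while `X_(1)` keeps half of it, giving `(r - 1/2)/N`; likewise
`P_h(X_(1), X_(N)) → (N - 1)/N`, the two extreme samples counting half each.
-/

open MeasureTheory Filter

/-- The Gaussian kernel `K(z) = exp(-z²/2)/√(2π)`. -/
noncomputable def gaussKernel (z : ℝ) : ℝ := Real.exp (-z ^ 2 / 2) / Real.sqrt (2 * Real.pi)

/-- The Gaussian kernel density estimator with bandwidth `h` for samples `X`. -/
noncomputable def kde (N : ℕ) (X : Fin N → ℝ) (h x : ℝ) : ℝ :=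
  (1 / (N * h)) * ∑ n, gaussKernel ((x - X n) / h)

/-- `P_h(a,b) = ∫_a^b f̂_h(t) dt`. -/
noncomputable def kdeMass (N : ℕ) (X : Fin N → ℝ) (h a b : ℝ) : ℝ :=
  ∫ t in a..b, kde N X h t

/-- The kernel density integral transform, where `a` is the sample minimum and `b`
the sample maximum. -/
noncomputable def kdi (N : ℕ) (X : Fin N → ℝ) (a b h x : ℝ) : ℝ :=
  if x < a then 0
  else if x < b then kdeMass N X h a x / kdeMass N X h a b
  else 1

/-- Min-max scaling, where `a` is the sample minimum and `b` the sample maximum. -/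
noncomputable def minmax (a b x : ℝ) : ℝ :=
  if x ≤ a then 0
  else if x ≤ b then (x - a) / (b - a)
  else 1

open Set Topology Finset

section IntegralIic

variable {f : ℝ → ℝ}

theorem tendsto_integral_Iic_atTop (hf : Integrable f) :
    Tendsto (fun y => ∫ t in Iic y, f t) atTop (𝓝 (∫ t, f t)) :=
  (aecover_Iic tendsto_id).integral_tendsto_of_countably_generated hf

theorem integral_Iic_zero_of_even (hf : Integrable f) (heven : ∀ t, f (-t) = f t) :
    ∫ t in Iic 0, f t = (∫ t, f t) / 2 := by
  have hsymm : ∫ t in Iic 0, f t = ∫ t in Ioi 0, f t := by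
    simpa [heven] using integral_comp_neg_Iic 0 f
  have hsplit := integral_add_compl (measurableSet_Iic (a := (0 : ℝ))) hf
  rw [compl_Iic, ← hsymm] at hsplit
  linarith

/-- `(1 + sign c) / 2` is the Heaviside step at `c`, with value `1/2` at `c = 0`. -/
theorem tendsto_integral_Iic_div_nhdsGT_zero (hf : Integrable f) (heven : ∀ t, f (-t) = f t)
    (c : ℝ) :
    Tendsto (fun h => ∫ t in Iic (c / h), f t) (𝓝[>] 0)
      (𝓝 ((1 + Real.sign c) / 2 * ∫ t, f t)) := by
  rcases lt_trichotomy c 0 with hc | rfl | hc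
  · rw [Real.sign_of_neg hc, show (1 + -1 : ℝ) / 2 = 0 by norm_num, zero_mul]
    exact tendsto_integral_Iic_zero (tendsto_inv_nhdsGT_zero.const_mul_atTop_of_neg hc)
  · simp only [zero_div, Real.sign_zero, integral_Iic_zero_of_even hf heven]
    rw [show (1 + 0 : ℝ) / 2 * ∫ t, f t = (∫ t, f t) / 2 by ring]
    exact tendsto_const_nhds
  · rw [Real.sign_of_pos hc, show (1 + 1 : ℝ) / 2 = 1 by norm_num, one_mul]
    exact (tendsto_integral_Iic_atTop hf).comp
      (tendsto_inv_nhdsGT_zero.const_mul_atTop hc)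

theorem intervalIntegral_comp_sub_div (hf : Integrable f) {h : ℝ} (hh : h ≠ 0) (a b c : ℝ) :
    ∫ t in a..b, f ((t - c) / h) =
      h * ((∫ t in Iic ((b - c) / h), f t) - ∫ t in Iic ((a - c) / h), f t) := by
  simp_rw [sub_div]
  rw [intervalIntegral.integral_comp_div_sub f hh, smul_eq_mul,
    ← intervalIntegral.integral_Iic_sub_Iic hf.integrableOn hf.integrableOn]

end IntegralIic

theorem Finset.sum_sign_eq_card_sub_card {ι : Type*} (s : Finset ι) (g : ι → ℝ) :
    ∑ i ∈ s, Real.sign (g i) = #{i ∈ s | 0 < g i} - #{i ∈ s | g i < 0} := by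
  have hsign : ∀ y : ℝ, Real.sign y = (if 0 < y then 1 else 0) - (if y < 0 then 1 else 0) := by
    intro y
    rcases lt_trichotomy y 0 with hy | rfl | hy
    · simp [Real.sign_of_neg hy, hy, hy.not_gt]
    · simp
    · simp [Real.sign_of_pos hy, hy, hy.not_gt]
  simp only [hsign, Finset.sum_sub_distrib, Finset.sum_boole]

section StrictMono

variable {N : ℕ} {X : Fin N → ℝ}

theorem StrictMono.sum_sign_sub_apply (hX : StrictMono X) (k : Fin N) :
    ∑ n, Real.sign (X k - X n) = 2 * (k : ℝ) - (N - 1) := by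
  have hpos : #{n : Fin N | 0 < X k - X n} = k := by
    simp only [sub_pos, hX.lt_iff_lt, filter_gt_eq_Iio, Fin.card_Iio]
  have hneg : #{n : Fin N | X k - X n < 0} = N - 1 - k := by
    simp only [sub_neg, hX.lt_iff_lt, filter_lt_eq_Ioi, Fin.card_Ioi]
  rw [sum_sign_eq_card_sub_card, hpos, hneg, Nat.cast_sub (by omega), Nat.cast_sub (by omega)]
  push_cast
  ring

theorem StrictMono.sum_sign_sub_of_lt_apply (hX : StrictMono X) {k : Fin N} {x : ℝ}
    (hlt : ∀ n < k, X n < x) (hxk : x < X k) :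
    ∑ n, Real.sign (x - X n) = 2 * (k : ℝ) - N := by
  have hpos : #{n : Fin N | 0 < x - X n} = k := by
    rw [← Fin.card_Iio k]
    congr 1
    ext n
    simp only [mem_filter, Finset.mem_univ, true_and, sub_pos, Finset.mem_Iio]
    exact ⟨fun hn => hX.lt_iff_lt.mp (hn.trans hxk), hlt n⟩
  have hneg : #{n : Fin N | x - X n < 0} = N - k := by
    rw [← Fin.card_Ici k]
    congr 1
    ext n
    simp only [mem_filter, Finset.mem_univ, true_and, sub_neg, Finset.mem_Ici]
    exact ⟨fun hn => not_lt.mp fun hnk => (hlt n hnk).asymm hn,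
      fun hkn => hxk.trans_le (hX.monotone hkn)⟩
  rw [sum_sign_eq_card_sub_card, hpos, hneg, Nat.cast_sub k.isLt.le]
  ring

end StrictMono

theorem gaussKernel_eq_gaussianPDFReal : gaussKernel = ProbabilityTheory.gaussianPDFReal 0 1 := by
  funext z
  simp [gaussKernel, ProbabilityTheory.gaussianPDFReal, div_eq_inv_mul]

theorem integrable_gaussKernel : Integrable gaussKernel :=
  gaussKernel_eq_gaussianPDFReal ▸ ProbabilityTheory.integrable_gaussianPDFReal 0 1

theorem integral_gaussKernel : ∫ z, gaussKernel z = 1 :=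
  gaussKernel_eq_gaussianPDFReal ▸ ProbabilityTheory.integral_gaussianPDFReal_eq_one 0 one_ne_zero

theorem gaussKernel_neg (z : ℝ) : gaussKernel (-z) = gaussKernel z := by
  simp [gaussKernel]

theorem continuous_gaussKernel : Continuous gaussKernel := by
  unfold gaussKernel
  fun_prop

noncomputable def gaussCDF (y : ℝ) : ℝ := ∫ t in Iic y, gaussKernel t

theorem tendsto_gaussCDF_div_nhdsGT_zero (c : ℝ) :
    Tendsto (fun h => gaussCDF (c / h)) (𝓝[>] 0) (𝓝 ((1 + Real.sign c) / 2)) := by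
  have h := tendsto_integral_Iic_div_nhdsGT_zero integrable_gaussKernel gaussKernel_neg c
  rwa [integral_gaussKernel, mul_one] at h

theorem kdeMass_eq_sum_gaussCDF (N : ℕ) (X : Fin N → ℝ) {h : ℝ} (hh : h ≠ 0) (a b : ℝ) :
    kdeMass N X h a b = (∑ n, (gaussCDF ((b - X n) / h) - gaussCDF ((a - X n) / h))) / N := by
  have hint : ∀ n, IntervalIntegrable (fun t => gaussKernel ((t - X n) / h)) volume a b :=
    fun n => (continuous_gaussKernel.comp (by fun_prop)).intervalIntegrable a b
  simp only [kdeMass, kde]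
  rw [intervalIntegral.integral_const_mul, intervalIntegral.integral_finsetSum fun n _ => hint n]
  simp only [intervalIntegral_comp_sub_div integrable_gaussKernel hh, ← mul_sum]
  rw [div_mul_eq_mul_div, one_mul, mul_comm h, mul_div_mul_right _ _ hh]
  rfl

theorem tendsto_kdeMass_nhdsGT_zero (N : ℕ) (X : Fin N → ℝ) (a b : ℝ) :
    Tendsto (fun h => kdeMass N X h a b) (𝓝[>] 0)
      (𝓝 ((∑ n, (Real.sign (b - X n) - Real.sign (a - X n))) / (2 * N))) := by
  have hlim := (tendsto_finsetSum univ fun n _ => (tendsto_gaussCDF_div_nhdsGT_zero (b - X n)).sub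
    (tendsto_gaussCDF_div_nhdsGT_zero (a - X n))).div_const (N : ℝ)
  have heq : ∀ᶠ h in 𝓝[>] (0 : ℝ),
      (∑ n, (gaussCDF ((b - X n) / h) - gaussCDF ((a - X n) / h))) / N = kdeMass N X h a b :=
    eventually_mem_nhdsWithin.mono fun h hh => (kdeMass_eq_sum_gaussCDF N X hh.ne' a b).symm
  convert hlim.congr' heq using 2
  simp_rw [show ∀ u v : ℝ, (1 + u) / 2 - (1 + v) / 2 = (u - v) / 2 from fun u v => by ring,
    ← sum_div, div_div]

theorem kdi_eq_div_of_le_of_lt {N : ℕ} {X : Fin N → ℝ} {a b h x : ℝ} (hax : a ≤ x)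
    (hxb : x < b) :
    kdi N X a b h x = kdeMass N X h a x / kdeMass N X h a b := by
  rw [kdi, if_neg hax.not_gt, if_pos hxb]

/-- For pairwise distinct samples `X_(1) < … < X_(N)` (here `X` is strictly monotone,
so `X ⟨i⟩` is the `(i+1)`-th order statistic), for `1 ≤ r ≤ N - 1` and
`X_(r) < x < X_(r+1)`, the small-bandwidth limit of the KD-integral transform is
`(2r - 1)/(2(N - 1))`. -/
theorem kdi_tendsto_of_between_order_stats (N : ℕ) (X : Fin N → ℝ)
    (hX : StrictMono X) (r : ℕ) (hr1 : 1 ≤ r) (hr2 : r ≤ N - 1) (x : ℝ)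
    (hx1 : X ⟨r - 1, by omega⟩ < x) (hx2 : x < X ⟨r, by omega⟩) :
    Tendsto (fun h => kdi N X (X ⟨0, by omega⟩) (X ⟨N - 1, by omega⟩) h x)
      (nhdsWithin 0 (Set.Ioi 0))
      (nhds ((2 * (r : ℝ) - 1) / (2 * ((N : ℝ) - 1)))) := by
  have hlt : ∀ n < (⟨r, by omega⟩ : Fin N), X n < x := fun n hn =>
    (hX.monotone (Fin.le_def.mpr (Nat.le_sub_one_of_lt hn))).trans_lt hx1
  have hax : X ⟨0, by omega⟩ < x := hlt _ (Fin.mk_lt_mk.mpr (by omega))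
  have hxb : x < X ⟨N - 1, by omega⟩ := hx2.trans_le (hX.monotone (Fin.mk_le_mk.mpr (by omega)))
  have hN2 : (2 : ℝ) ≤ N := by exact_mod_cast (by omega : 2 ≤ N)
  have hnum : Tendsto (fun h => kdeMass N X h (X ⟨0, by omega⟩) x) (𝓝[>] 0)
      (𝓝 ((2 * r - 1) / (2 * N))) := by
    convert tendsto_kdeMass_nhdsGT_zero N X (X ⟨0, by omega⟩) x using 3
    rw [sum_sub_distrib, hX.sum_sign_sub_of_lt_apply hlt hx2, hX.sum_sign_sub_apply]
    simp only [Nat.cast_zero]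
    ring
  have hden : Tendsto (fun h => kdeMass N X h (X ⟨0, by omega⟩) (X ⟨N - 1, by omega⟩))
      (𝓝[>] 0) (𝓝 ((N - 1) / N)) := by
    convert tendsto_kdeMass_nhdsGT_zero N X (X ⟨0, by omega⟩) (X ⟨N - 1, by omega⟩) using 2
    rw [sum_sub_distrib, hX.sum_sign_sub_apply, hX.sum_sign_sub_apply]
    simp only [Nat.cast_zero, Nat.cast_sub (by omega : 1 ≤ N), Nat.cast_one]
    field_simp
    ring
  convert (hnum.div hden (div_ne_zero (by linarith) (by linarith))).congr
    fun _ => (kdi_eq_div_of_le_of_lt hax.le hxb).symm using 2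
  field_simp
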